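/- Let l be an odd integer, l ≥ 3, and let F' be the graph consisting of a matching of (l−1)/2 pairwise disjoint edges together with one isolated vertex (a spanning forest of the path P_l on l vertices). Then for all n and e, ex(n,e,P_l,K_3) ≤ ((l−1)/2)! · ex(n,e,F',K_3) / 2. -/

import Mathlib

open Filter Finset SimpleGraph

/-- `N(H,G)`: the number of subgraphs of `G` isomorphic to `H`. -/
noncomputable def copyCount {α β : Type*} (H : SimpleGraph α) (G : SimpleGraph β) : ℕ :=
  {G' : G.Subgraph | Nonempty (H ≃g G'.coe)}.ncard

/-- The star with `k` leaves, `K_{1,k}`, with center `0`. -/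
def starGraph (k : ℕ) : SimpleGraph (Fin (k + 1)) where
  Adj i j := i ≠ j ∧ (i = 0 ∨ j = 0)
  symm := by constructor; intro i j h; exact ⟨h.1.symm, h.2.symm⟩
  loopless := by constructor; intro i h; exact h.1 rfl

/-- The matching with `m` pairwise disjoint edges. -/
def matchingGraph (m : ℕ) : SimpleGraph (Fin m × Fin 2) where
  Adj a b := a.1 = b.1 ∧ a.2 ≠ b.2
  symm := by constructor; intro a b h; exact ⟨h.1.symm, h.2.symm⟩
  loopless := by constructor; intro a h; exact h.2 rfl

/-- `v_e`: the largest `v` with `C(v,2) ≤ e`. -/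
def vE (e : ℕ) : ℕ := Nat.findGreatest (fun v => v.choose 2 ≤ e) (e + 1)

/-- The quasi-clique `K^e_n`: writing `e = C(a,2) + b` with `0 ≤ b < a`, it consists of a
clique on the first `a` vertices, one further vertex joined to `b` vertices of the clique,
and all remaining vertices isolated. -/
def quasiClique (n e : ℕ) : SimpleGraph (Fin n) where
  Adj i j := i ≠ j ∧ ((i.val < vE e ∧ j.val < vE e) ∨
    (i.val = vE e ∧ j.val < e - Nat.choose (vE e) 2) ∨
    (j.val = vE e ∧ i.val < e - Nat.choose (vE e) 2))
  symm := by constructor; intro i j h; exact ⟨h.1.symm, by tauto⟩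
  loopless := by constructor; intro i h; exact h.1 rfl

/-- `t`: the smallest positive integer `i` with `i * (n - i) ≥ e`. -/
noncomputable def bipT (n e : ℕ) : ℕ := sInf {i : ℕ | 0 < i ∧ e ≤ i * (n - i)}

/-- The quasi-complete bipartite graph `B^e_n`: obtained from the complete bipartite graph
`K_{t, n-t}` (parts `{0, …, t-1}` and `{t, …, n-1}`) by deleting `t*(n-t) - e` edges
incident to the vertex `0` of degree `n - t`. -/
noncomputable def quasiBip (n e : ℕ) : SimpleGraph (Fin n) where
  Adj i j :=
    (i.val < bipT n e ∧ bipT n e ≤ j.val ∧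
      (0 < i.val ∨ j.val < n - (bipT n e * (n - bipT n e) - e))) ∨
    (j.val < bipT n e ∧ bipT n e ≤ i.val ∧
      (0 < j.val ∨ i.val < n - (bipT n e * (n - bipT n e) - e)))
  symm := by constructor; intro i j h; tauto
  loopless := by constructor; intro i h; rcases h with ⟨h1, h2, -⟩ | ⟨h1, h2, -⟩ <;> omega

/-- `ex(n,e,H)`: the maximum number of copies of `H` in a graph with `n` vertices and
`e` edges. -/
noncomputable def exCount {α : Type*} (n e : ℕ) (H : SimpleGraph α) : ℕ :=
  sSup {N | ∃ G : SimpleGraph (Fin n), G.edgeSet.ncard = e ∧ copyCount H G = N}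

/-- `ex_bip(n,e,H)`: the maximum number of copies of `H` in a bipartite graph with
`n` vertices and `e` edges. -/
noncomputable def exBip {α : Type*} (n e : ℕ) (H : SimpleGraph α) : ℕ :=
  sSup {N | ∃ G : SimpleGraph (Fin n),
    G.Colorable 2 ∧ G.edgeSet.ncard = e ∧ copyCount H G = N}

/-- `ex(n,e,H,K₃)`: the maximum number of copies of `H` in a triangle-free graph with
`n` vertices and `e` edges. -/
noncomputable def exTriFree {α : Type*} (n e : ℕ) (H : SimpleGraph α) : ℕ :=
  sSup {N | ∃ G : SimpleGraph (Fin n),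
    G.CliqueFree 3 ∧ G.edgeSet.ncard = e ∧ copyCount H G = N}
namespace Stmt8Aux

open Function

instance {V : Type*} [Finite V] {G : SimpleGraph V} : Finite G.Subgraph := by
  have hinj : Function.Injective (fun H : G.Subgraph => (H.verts, H.Adj)) := by
    intro H1 H2 h
    exact SimpleGraph.Subgraph.ext (congrArg Prod.fst h) (congrArg Prod.snd h)
  exact Finite.of_injective _ hinj

lemma noTriangle {V : Type*} {G : SimpleGraph V} (hG : G.CliqueFree 3) {a b c : V}
    (hab : G.Adj a b) (hac : G.Adj a c) (hbc : G.Adj b c) : False := by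
  classical
  exact hG {a, b, c} (SimpleGraph.is3Clique_triple_iff.mpr ⟨hab, hac, hbc⟩)

variable {n m : ℕ}

/-- The set of "embeddings" (injective homomorphisms) of `H` into `G`. -/
def EmbSet (G : SimpleGraph (Fin n)) {α : Type*} (H : SimpleGraph α) : Set (α → Fin n) :=
  {f | Function.Injective f ∧ ∀ u v, H.Adj u v → G.Adj (f u) (f v)}

/-- The set of copies of `H` in `G`. -/
def Copies (G : SimpleGraph (Fin n)) {α : Type*} (H : SimpleGraph α) : Set G.Subgraph :=
  {G' | Nonempty (H ≃g G'.coe)}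

lemma copyCount_eq (G : SimpleGraph (Fin n)) {α : Type*} (H : SimpleGraph α) :
    copyCount H G = (Copies G H).ncard := rfl

/-- The image subgraph of a map. -/
def img (G : SimpleGraph (Fin n)) {α : Type*} (H : SimpleGraph α) (f : α → Fin n) :
    G.Subgraph where
  verts := Set.range f
  Adj x y := G.Adj x y ∧ ∃ u v, H.Adj u v ∧ f u = x ∧ f v = y
  adj_sub h := h.1
  edge_vert h := by obtain ⟨-, u, v, -, hu, -⟩ := h; exact ⟨u, hu⟩
  symm := ⟨fun x y h => ⟨h.1.symm, by obtain ⟨-, u, v, ha, hu, hv⟩ := h; exact ⟨v, u, ha.symm, hv, hu⟩⟩⟩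

lemma img_mem_copies {G : SimpleGraph (Fin n)} {α : Type*} {H : SimpleGraph α}
    {f : α → Fin n} (hf : f ∈ EmbSet G H) : img G H f ∈ Copies G H := by
  refine ⟨⟨Equiv.ofInjective f hf.1, ?_⟩⟩
  intro a b
  show (img G H f).Adj (f a) (f b) ↔ H.Adj a b
  constructor
  · rintro ⟨-, u, v, huv, hu, hv⟩
    rwa [hf.1 hu, hf.1 hv] at huv
  · intro h
    exact ⟨hf.2 a b h, a, b, h, rfl, rfl⟩

lemma emb_of_iso {G : SimpleGraph (Fin n)} {α : Type*} {H : SimpleGraph α} {G' : G.Subgraph}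
    (φ : H ≃g G'.coe) :
    (fun a => (φ a : Fin n)) ∈ EmbSet G H ∧ img G H (fun a => (φ a : Fin n)) = G' := by
  have hinj : Function.Injective (fun a => (φ a : Fin n)) := by
    intro a b h
    exact φ.toEquiv.injective (Subtype.ext h)
  have hhom : ∀ u v, H.Adj u v → G.Adj (φ u : Fin n) (φ v : Fin n) := by
    intro u v h
    exact G'.adj_sub (φ.map_rel_iff.mpr h)
  refine ⟨⟨hinj, hhom⟩, ?_⟩
  apply SimpleGraph.Subgraph.ext
  · ext x
    constructor
    · rintro ⟨a, rfl⟩; exact (φ a).2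
    · intro hx
      exact ⟨φ.symm ⟨x, hx⟩, congrArg Subtype.val (φ.apply_symm_apply ⟨x, hx⟩)⟩
  · funext x y
    apply propext
    constructor
    · rintro ⟨-, u, v, huv, hu, hv⟩
      have : G'.coe.Adj (φ u) (φ v) := φ.map_rel_iff.mpr huv
      rw [← hu, ← hv]
      exact this
    · intro h
      have hx : x ∈ G'.verts := G'.edge_vert h
      have hy : y ∈ G'.verts := G'.edge_vert h.symm
      have hcoe : G'.coe.Adj ⟨x, hx⟩ ⟨y, hy⟩ := h
      refine ⟨G'.adj_sub h, φ.symm ⟨x, hx⟩, φ.symm ⟨y, hy⟩, ?_, ?_, ?_⟩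
      · rw [← φ.map_rel_iff, φ.apply_symm_apply, φ.apply_symm_apply]
        exact hcoe
      · exact congrArg Subtype.val (φ.apply_symm_apply ⟨x, hx⟩)
      · exact congrArg Subtype.val (φ.apply_symm_apply ⟨y, hy⟩)

/-- Reversal as an automorphism of the path graph. -/
def pathRev (l : ℕ) : pathGraph l ≃g pathGraph l := by
  refine ⟨Fin.revPerm, ?_⟩
  intro a b
  simp only [Fin.revPerm_apply, pathGraph_adj, Fin.val_rev]
  have := a.isLt
  have := b.isLt
  omega

lemma L1 {G : SimpleGraph (Fin n)} (hm : 0 < m) :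
    2 * (Copies G (pathGraph (2 * m + 1))).ncard ≤
      Nat.card (EmbSet G (pathGraph (2 * m + 1))) := by
  classical
  set l := 2 * m + 1 with hl
  let Φ : Copies G (pathGraph l) × Bool → (Fin l → Fin n) := fun p =>
    fun a => ((Classical.choice p.1.2 : pathGraph l ≃g p.1.1.coe)
      ((if p.2 then pathRev l else RelIso.refl _) a) : Fin n)
  have hmem : ∀ p, Φ p ∈ EmbSet G (pathGraph l) := by
    rintro ⟨⟨G', hG'⟩, b⟩
    exact (emb_of_iso (((if b then pathRev l else RelIso.refl _)).trans
      (Classical.choice hG'))).1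
  have himg : ∀ (G') (hG' : G' ∈ Copies G (pathGraph l)) (b),
      img G (pathGraph l) (Φ (⟨G', hG'⟩, b)) = G' := by
    intro G' hG' b
    exact (emb_of_iso (((if b then pathRev l else RelIso.refl _)).trans
      (Classical.choice hG'))).2
  let Φ' : Copies G (pathGraph l) × Bool → EmbSet G (pathGraph l) :=
    fun p => ⟨Φ p, hmem p⟩
  have hinj : Function.Injective Φ' := by
    rintro ⟨⟨G', hG'⟩, b⟩ ⟨⟨G'', hG''⟩, b'⟩ h
    replace h : Φ (⟨G', hG'⟩, b) = Φ (⟨G'', hG''⟩, b') := congrArg Subtype.val h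
    have hGG : G' = G'' := by
      rw [← himg G' hG' b, ← himg G'' hG'' b', h]
    subst hGG
    have h0 := congrFun h 0
    have he : ((if b then pathRev l else RelIso.refl _) (0 : Fin l)) =
        ((if b' then pathRev l else RelIso.refl _) (0 : Fin l)) := by
      have hch : Classical.choice hG'' = Classical.choice hG' := rfl
      exact (Classical.choice hG').toEquiv.injective (Subtype.ext h0)
    have hb : b = b' := by
      have hval := congrArg Fin.val he
      cases b <;> cases b' <;> simp [pathRev, Fin.val_rev] at hval ⊢ <;> omega
    subst hb
    rfl
  have hcard := Nat.card_le_card_of_injective Φ' hinj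
  rw [Nat.card_prod] at hcard
  rw [Nat.card_coe_set_eq (Copies G (pathGraph l))] at hcard
  simpa [Nat.card_coe_set_eq, Nat.card_eq_fintype_card, Nat.mul_comm] using hcard


/-- `F'`: matching plus isolated vertex. -/
abbrev FG (m : ℕ) : SimpleGraph ((Fin m × Fin 2) ⊕ Fin 1) :=
  matchingGraph m ⊕g (⊥ : SimpleGraph (Fin 1))

lemma FG_adj {a b : (Fin m × Fin 2) ⊕ Fin 1} (h : (FG m).Adj a b) :
    ∃ i c d, c ≠ d ∧ a = Sum.inl (i, c) ∧ b = Sum.inl (i, d) := by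
  match a, b with
  | Sum.inl (i, c), Sum.inl (j, d) =>
    obtain ⟨h1, h2⟩ : i = j ∧ c ≠ d := h
    exact ⟨i, c, d, h2, rfl, by rw [h1]⟩
  | Sum.inl _, Sum.inr _ => simp [SimpleGraph.sum] at h
  | Sum.inr _, Sum.inl _ => simp [SimpleGraph.sum] at h
  | Sum.inr _, Sum.inr _ => simp [SimpleGraph.sum] at h

lemma FG_adj_inl {i : Fin m} {c d : Fin 2} (h : c ≠ d) :
    (FG m).Adj (Sum.inl (i, c)) (Sum.inl (i, d)) := ⟨rfl, h⟩

/-- the index in the path corresponding to a vertex of `F'`, given flips `ε`. -/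
def idx (m : ℕ) (ε : Fin m → Fin 2) : (Fin m × Fin 2) ⊕ Fin 1 → Fin (2 * m + 1)
  | Sum.inl (i, b) => ⟨2 * i.val + (if b = ε i then 0 else 1), by
      have := i.isLt; split <;> omega⟩
  | Sum.inr _ => ⟨2 * m, by omega⟩

lemma fin2_eq_of_ne {a b c : Fin 2} (h1 : a ≠ c) (h2 : b ≠ c) : a = b := by
  fin_cases a <;> fin_cases b <;> fin_cases c <;> simp_all

lemma fin2_add_one_ne : ∀ a : Fin 2, a + 1 ≠ a := by decide

lemma idx_inl_eq (ε : Fin m → Fin 2) (i : Fin m) {b : Fin 2} (hb : b = ε i)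
    (h : 2 * i.val < 2 * m + 1) :
    idx m ε (Sum.inl (i, b)) = ⟨2 * i.val, h⟩ := Fin.ext (by simp [idx, hb])

lemma idx_inl_ne (ε : Fin m → Fin 2) (i : Fin m) {b : Fin 2} (hb : b ≠ ε i)
    (h : 2 * i.val + 1 < 2 * m + 1) :
    idx m ε (Sum.inl (i, b)) = ⟨2 * i.val + 1, h⟩ := Fin.ext (by simp [idx, hb])

lemma idx_injective (ε : Fin m → Fin 2) : Function.Injective (idx m ε) := by
  intro a b h
  match a, b with
  | Sum.inl (i, c), Sum.inl (j, d) =>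
    have hv := congrArg Fin.val h
    simp only [idx] at hv
    have hi := i.isLt
    have hj := j.isLt
    have hij : i.val = j.val := by split_ifs at hv <;> omega
    have hIJ : i = j := Fin.ext hij
    subst hIJ
    rcases eq_or_ne c (ε i) with hc | hc
    · rcases eq_or_ne d (ε i) with hd | hd
      · rw [hc, hd]
      · simp [hc, hd] at hv
    · rcases eq_or_ne d (ε i) with hd | hd
      · simp [hc, hd] at hv
      · rw [fin2_eq_of_ne hc hd]
  | Sum.inl (i, c), Sum.inr _ =>
    have hv := congrArg Fin.val h
    simp only [idx] at hv
    have := i.isLt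
    split_ifs at hv <;> omega
  | Sum.inr _, Sum.inl (j, d) =>
    have hv := congrArg Fin.val h
    simp only [idx] at hv
    have := j.isLt
    split_ifs at hv <;> omega
  | Sum.inr x, Sum.inr y =>
    rw [Subsingleton.elim x y]

lemma path_adj {j k : ℕ} (hj : j + 1 = k) (hk : k < 2 * m + 1) :
    (pathGraph (2 * m + 1)).Adj ⟨j, by omega⟩ ⟨k, hk⟩ :=
  pathGraph_adj.mpr (Or.inl hj)

lemma recover {G : SimpleGraph (Fin n)} (hG : G.CliqueFree 3)
    {f f' : Fin (2 * m + 1) → Fin n} {ε ε' : Fin m → Fin 2}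
    (hf : f ∈ EmbSet G (pathGraph (2 * m + 1)))
    (hf' : f' ∈ EmbSet G (pathGraph (2 * m + 1)))
    (hg : ∀ x, f (idx m ε x) = f' (idx m ε' x)) : f = f' ∧ ε = ε' := by
  have main : ∀ d : ℕ, ∀ j : ℕ, ∀ hj : j < 2 * m + 1, 2 * m ≤ j + 2 * d →
      f ⟨j, hj⟩ = f' ⟨j, hj⟩ := by
    intro d
    induction d with
    | zero =>
      intro j hj hd
      have hj2 : j = 2 * m := by omega
      subst hj2
      exact hg (Sum.inr 0)
    | succ d ih =>
      intro j hj hd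
      by_cases hc : 2 * m ≤ j + 2 * d
      · exact ih j hj hc
      · push_neg at hc
        obtain ⟨I, hjI⟩ : ∃ I : Fin m, j = 2 * I.val ∨ j = 2 * I.val + 1 := by
          refine ⟨⟨m - d - 1, by omega⟩, ?_⟩
          show j = 2 * (m - d - 1) ∨ j = 2 * (m - d - 1) + 1
          omega
        have hIlt := I.isLt
        have p0 : 2 * I.val < 2 * m + 1 := by omega
        have p1 : 2 * I.val + 1 < 2 * m + 1 := by omega
        have p2 : 2 * I.val + 2 < 2 * m + 1 := by omega
        have hw : f ⟨2 * I.val + 2, p2⟩ = f' ⟨2 * I.val + 2, p2⟩ :=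
          ih (2 * I.val + 2) p2 (by omega)
        have hstep : f ⟨2 * I.val, p0⟩ = f' ⟨2 * I.val, p0⟩ ∧
            f ⟨2 * I.val + 1, p1⟩ = f' ⟨2 * I.val + 1, p1⟩ := by
          rcases eq_or_ne (ε I) (ε' I) with hee | hee
          · constructor
            · have h1 := hg (Sum.inl (I, ε I))
              rwa [idx_inl_eq ε I rfl p0, idx_inl_eq ε' I hee p0] at h1
            · have h1 := hg (Sum.inl (I, ε I + 1))
              rwa [idx_inl_ne ε I (fin2_add_one_ne _) p1,
                idx_inl_ne ε' I (hee ▸ fin2_add_one_ne (ε I)) p1] at h1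
          · exfalso
            have hA : f ⟨2 * I.val, p0⟩ = f' ⟨2 * I.val + 1, p1⟩ := by
              have h1 := hg (Sum.inl (I, ε I))
              rwa [idx_inl_eq ε I rfl p0, idx_inl_ne ε' I hee p1] at h1
            have t1 : G.Adj (f ⟨2 * I.val, p0⟩) (f ⟨2 * I.val + 1, p1⟩) :=
              hf.2 _ _ (path_adj rfl p1)
            have t2 : G.Adj (f ⟨2 * I.val + 1, p1⟩) (f ⟨2 * I.val + 2, p2⟩) :=
              hf.2 _ _ (path_adj rfl p2)
            have t3 : G.Adj (f' ⟨2 * I.val + 1, p1⟩) (f' ⟨2 * I.val + 2, p2⟩) :=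
              hf'.2 _ _ (path_adj rfl p2)
            rw [← hw, ← hA] at t3
            exact noTriangle hG t1 t3 t2
        rcases hjI with rfl | rfl
        · exact hstep.1
        · exact hstep.2
  have hff : f = f' := by
    funext x
    have h1 := main m x.val x.isLt (by omega)
    simpa using h1
  refine ⟨hff, ?_⟩
  funext i
  by_contra hne
  have hi := i.isLt
  have h1 := hg (Sum.inl (i, ε i))
  rw [idx_inl_eq ε i rfl (by omega), idx_inl_ne ε' i hne (by omega), ← hff] at h1
  have h2 := congrArg Fin.val (hf.1 h1)
  simp at h2

set_option maxHeartbeats 1000000 in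
lemma L2 {G : SimpleGraph (Fin n)} (hG : G.CliqueFree 3) (hm : 0 < m) :
    2 ^ m * Nat.card (EmbSet G (pathGraph (2 * m + 1))) ≤
      Nat.card (EmbSet G (FG m)) := by
  classical
  let Θ : EmbSet G (pathGraph (2 * m + 1)) × (Fin m → Fin 2) →
      (((Fin m × Fin 2) ⊕ Fin 1) → Fin n) :=
    fun p => (p.1 : Fin (2 * m + 1) → Fin n) ∘ idx m p.2
  have hmem : ∀ p, Θ p ∈ EmbSet G (FG m) := by
    rintro ⟨⟨f, hfinj, hfhom⟩, ε⟩
    constructor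
    · exact hfinj.comp (idx_injective ε)
    · intro u v huv
      obtain ⟨i, c, d, hcd, rfl, rfl⟩ := FG_adj huv
      apply hfhom
      have hi := i.isLt
      show (pathGraph (2 * m + 1)).Adj (idx m ε (Sum.inl (i, c))) (idx m ε (Sum.inl (i, d)))
      rcases eq_or_ne c (ε i) with hc | hc
      · have hd : d ≠ ε i := fun hd => hcd (hc.trans hd.symm)
        rw [idx_inl_eq ε i hc (by omega), idx_inl_ne ε i hd (by omega)]
        exact path_adj rfl _
      · have hd : d = ε i := fin2_eq_of_ne (Ne.symm hcd) (Ne.symm hc)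
        rw [idx_inl_ne ε i hc (by omega), idx_inl_eq ε i hd (by omega)]
        exact (path_adj rfl _).symm
  let Θ' : EmbSet G (pathGraph (2 * m + 1)) × (Fin m → Fin 2) → EmbSet G (FG m) :=
    fun p => ⟨Θ p, hmem p⟩
  have hinj : Function.Injective Θ' := by
    rintro ⟨⟨f, hf⟩, ε⟩ ⟨⟨f', hf'⟩, ε'⟩ h
    replace h : Θ (⟨f, hf⟩, ε) = Θ (⟨f', hf'⟩, ε') := congrArg Subtype.val h
    obtain ⟨hff, hee⟩ := recover hG hf hf' (fun x => congrFun h x)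
    subst hff
    subst hee
    rfl
  have hcard := Nat.card_le_card_of_injective Θ' hinj
  rw [Nat.card_prod] at hcard
  have h2m : Nat.card (Fin m → Fin 2) = 2 ^ m := by
    simp [Nat.card_eq_fintype_card]
  rw [h2m] at hcard
  rwa [mul_comm]

lemma L3 {G : SimpleGraph (Fin n)} (hm : 0 < m) :
    Nat.card (EmbSet G (FG m)) ≤
      (m.factorial * 2 ^ m) * (Copies G (FG m)).ncard := by
  classical
  have hfin : (EmbSet G (FG m)).Finite := Set.toFinite _
  have hfinC : (Copies G (FG m)).Finite := Set.toFinite _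
  set s : Finset (((Fin m × Fin 2) ⊕ Fin 1) → Fin n) := hfin.toFinset with hs
  have hcards : Nat.card (EmbSet G (FG m)) = s.card := by
    rw [Nat.card_coe_set_eq, Set.ncard_eq_toFinset_card _ hfin]
  have hfiber : ∀ B ∈ s.image (fun g => img G (FG m) g),
      (s.filter (fun g => img G (FG m) g = B)).card ≤ m.factorial * 2 ^ m := by
    intro B hB
    obtain ⟨g₀, hg₀s, hg₀⟩ := Finset.mem_image.mp hB
    have hBc : B ∈ Copies G (FG m) := hg₀ ▸ img_mem_copies (hfin.mem_toFinset.mp hg₀s)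
    obtain ⟨ψ⟩ := hBc
    haveI : Nonempty B.verts := ⟨ψ (Sum.inr 0)⟩
    set U : (((Fin m × Fin 2) ⊕ Fin 1) → Fin n) → Fin m → (Fin m × Fin 2) ⊕ Fin 1 :=
      fun g i => ψ.symm (if h : g (Sum.inl (i, 0)) ∈ B.verts then ⟨g (Sum.inl (i, 0)), h⟩
        else Classical.arbitrary _) with hU
    set V : (((Fin m × Fin 2) ⊕ Fin 1) → Fin n) → Fin m → (Fin m × Fin 2) ⊕ Fin 1 :=
      fun g i => ψ.symm (if h : g (Sum.inl (i, 1)) ∈ B.verts then ⟨g (Sum.inl (i, 1)), h⟩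
        else Classical.arbitrary _) with hV
    set pr : (Fin m × Fin 2) ⊕ Fin 1 → Fin m × Fin 2 :=
      Sum.elim id (fun _ => (⟨0, hm⟩, 0)) with hpr
    set K : (((Fin m × Fin 2) ⊕ Fin 1) → Fin n) → Fin m → Fin m :=
      fun g i => (pr (U g i)).1 with hK
    set A : (((Fin m × Fin 2) ⊕ Fin 1) → Fin n) → Fin m → Fin 2 :=
      fun g i => (pr (U g i)).2 with hA
    set D : (((Fin m × Fin 2) ⊕ Fin 1) → Fin n) → Fin m → Fin 2 :=
      fun g i => (pr (V g i)).2 with hD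
    -- structural facts for members of the fiber
    have hfacts : ∀ g, g ∈ EmbSet G (FG m) → img G (FG m) g = B → ∀ i : Fin m,
        U g i = Sum.inl (K g i, A g i) ∧ V g i = Sum.inl (K g i, D g i) ∧ D g i ≠ A g i ∧
        (ψ (U g i) : Fin n) = g (Sum.inl (i, 0)) ∧ (ψ (V g i) : Fin n) = g (Sum.inl (i, 1)) := by
      intro g hgE hgB i
      have hv : ∀ x, g x ∈ B.verts := by
        intro x
        rw [← hgB]
        exact ⟨x, rfl⟩
      have hU' : U g i = ψ.symm ⟨g (Sum.inl (i, 0)), hv _⟩ := by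
        simp only [hU]; rw [dif_pos (hv _)]
      have hV' : V g i = ψ.symm ⟨g (Sum.inl (i, 1)), hv _⟩ := by
        simp only [hV]; rw [dif_pos (hv _)]
      have hpsiU : (ψ (U g i) : Fin n) = g (Sum.inl (i, 0)) := by
        rw [hU', RelIso.apply_symm_apply]
      have hpsiV : (ψ (V g i) : Fin n) = g (Sum.inl (i, 1)) := by
        rw [hV', RelIso.apply_symm_apply]
      have hadjB : B.Adj (g (Sum.inl (i, 0))) (g (Sum.inl (i, 1))) := by
        rw [← hgB]
        exact ⟨hgE.2 _ _ (FG_adj_inl (by decide)), Sum.inl (i, 0), Sum.inl (i, 1),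
          FG_adj_inl (by decide), rfl, rfl⟩
      have hadjF : (FG m).Adj (U g i) (V g i) := by
        rw [hU', hV']
        exact ψ.symm.map_rel_iff.mpr hadjB
      obtain ⟨p, c, d, hcd, hu, hvv⟩ := FG_adj hadjF
      have hKc : K g i = p ∧ A g i = c := by
        simp only [hK, hA, hu, hpr]
        exact ⟨rfl, rfl⟩
      have hDc : D g i = d := by
        simp [hD, hvv, hpr]
      refine ⟨?_, ?_, ?_, hpsiU, hpsiV⟩
      · rw [hKc.1, hKc.2]
        exact hu
      · rw [hKc.1, hDc]
        exact hvv
      · rw [hKc.2, hDc]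
        exact Ne.symm hcd
    have hkinj : ∀ g, g ∈ EmbSet G (FG m) → img G (FG m) g = B →
        Function.Injective (K g) := by
      intro g hgE hgB i i' hkk
      obtain ⟨hu, hvv, hda, hpu, hpv⟩ := hfacts g hgE hgB i
      obtain ⟨hu', hvv', hda', hpu', hpv'⟩ := hfacts g hgE hgB i'
      rcases eq_or_ne (A g i) (A g i') with haa | haa
      · have : U g i = U g i' := by rw [hu, hu', hkk, haa]
        have h2 : g (Sum.inl (i, 0)) = g (Sum.inl (i', 0)) := by
          rw [← hpu, ← hpu', this]
        have h3 := hgE.1 h2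
        simpa using h3
      · have hDA : D g i = A g i' := fin2_eq_of_ne hda (Ne.symm haa)
        have : V g i = U g i' := by rw [hvv, hu', hkk, hDA]
        have h2 : g (Sum.inl (i, 1)) = g (Sum.inl (i', 0)) := by
          rw [← hpv, ← hpu', this]
        have h3 := hgE.1 h2
        simp [Prod.ext_iff] at h3
    set Θ : (((Fin m × Fin 2) ⊕ Fin 1) → Fin n) → (Fin m ↪ Fin m) × (Fin m → Fin 2) :=
      fun g => if hk : Function.Injective (K g) then (⟨K g, hk⟩, A g)
        else (Function.Embedding.refl _, A g) with hΘ
    have hinjOn : Set.InjOn Θ (s.filter (fun g => img G (FG m) g = B)) := by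
      intro g hg g' hg' heq
      rw [Finset.coe_filter] at hg hg'
      obtain ⟨hgs, hgB⟩ := hg
      obtain ⟨hg's, hg'B⟩ := hg'
      have hgE : g ∈ EmbSet G (FG m) := hfin.mem_toFinset.mp hgs
      have hg'E : g' ∈ EmbSet G (FG m) := hfin.mem_toFinset.mp hg's
      simp only [hΘ, dif_pos (hkinj g hgE hgB), dif_pos (hkinj g' hg'E hg'B)] at heq
      have hKK : K g = K g' := by
        have := congrArg Prod.fst heq
        simpa [Function.Embedding.ext_iff, funext_iff] using congrFun (congrArg
          (fun e : (Fin m ↪ Fin m) => (e : Fin m → Fin m)) this)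
      have hAA : A g = A g' := congrArg Prod.snd heq
      have heq0 : ∀ i : Fin m, g (Sum.inl (i, 0)) = g' (Sum.inl (i, 0)) := by
        intro i
        obtain ⟨hu, hvv, hda, hpu, hpv⟩ := hfacts g hgE hgB i
        obtain ⟨hu', hvv', hda', hpu', hpv'⟩ := hfacts g' hg'E hg'B i
        rw [← hpu, ← hpu', hu, hu', hKK, hAA]
      have heq1 : ∀ i : Fin m, g (Sum.inl (i, 1)) = g' (Sum.inl (i, 1)) := by
        intro i
        obtain ⟨hu, hvv, hda, hpu, hpv⟩ := hfacts g hgE hgB i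
        obtain ⟨hu', hvv', hda', hpu', hpv'⟩ := hfacts g' hg'E hg'B i
        have hDD : D g i = D g' i := by
          refine fin2_eq_of_ne hda ?_
          rw [hAA]
          exact hda'
        rw [← hpv, ← hpv', hvv, hvv', hKK, hDD]
      have heqInl : ∀ i (b : Fin 2), g (Sum.inl (i, b)) = g' (Sum.inl (i, b)) := by
        intro i b
        fin_cases b
        · exact heq0 i
        · exact heq1 i
      have heqInr : g (Sum.inr 0) = g' (Sum.inr 0) := by
        have hmem : g (Sum.inr 0) ∈ B.verts := by
          rw [← hgB]; exact ⟨Sum.inr 0, rfl⟩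
        rw [← hg'B] at hmem
        obtain ⟨x, hx⟩ := hmem
        match x with
        | Sum.inl (i, b) =>
          exfalso
          rw [← heqInl i b] at hx
          have := hgE.1 hx
          simp at this
        | Sum.inr z =>
          rw [Subsingleton.elim z (0 : Fin 1)] at hx
          exact hx.symm
      funext x
      match x with
      | Sum.inl (i, b) => exact heqInl i b
      | Sum.inr z =>
        rw [Subsingleton.elim z (0 : Fin 1)]
        exact heqInr
    have hcardfil := Finset.card_le_card_of_injOn Θ
      (fun a _ => Finset.mem_univ (Θ a)) hinjOn
    have huniv : (Finset.univ : Finset ((Fin m ↪ Fin m) × (Fin m → Fin 2))).card =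
        m.factorial * 2 ^ m := by
      simp [Fintype.card_embedding_eq, Nat.descFactorial_self]
    omega
  have hmain := Finset.card_le_mul_card_image (f := fun g => img G (FG m) g) s
    (m.factorial * 2 ^ m) hfiber
  have himgsub : s.image (fun g => img G (FG m) g) ⊆ hfinC.toFinset := by
    intro B hB
    obtain ⟨g, hgs, hg⟩ := Finset.mem_image.mp hB
    rw [hfinC.mem_toFinset]
    exact hg ▸ img_mem_copies (hfin.mem_toFinset.mp hgs)
  have hC : hfinC.toFinset.card = (Copies G (FG m)).ncard :=
    (Set.ncard_eq_toFinset_card _ hfinC).symm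
  calc Nat.card (EmbSet G (FG m)) = s.card := hcards
    _ ≤ (m.factorial * 2 ^ m) * (s.image (fun g => img G (FG m) g)).card := hmain
    _ ≤ (m.factorial * 2 ^ m) * hfinC.toFinset.card :=
        Nat.mul_le_mul_left _ (Finset.card_le_card himgsub)
    _ = (m.factorial * 2 ^ m) * (Copies G (FG m)).ncard := by rw [hC]

lemma key (hm : 0 < m) (G : SimpleGraph (Fin n)) (hG : G.CliqueFree 3) :
    2 * _root_.copyCount (pathGraph (2 * m + 1)) G ≤ m.factorial * _root_.copyCount (FG m) G := by
  have h1 := L1 (G := G) (m := m) hm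
  have h2 := L2 (G := G) hG hm
  have h3 := L3 (G := G) (m := m) hm
  rw [copyCount_eq, copyCount_eq]
  have hchain : 2 ^ m * (2 * (Copies G (pathGraph (2 * m + 1))).ncard) ≤
      2 ^ m * (m.factorial * (Copies G (FG m)).ncard) :=
    calc 2 ^ m * (2 * (Copies G (pathGraph (2 * m + 1))).ncard)
        ≤ 2 ^ m * Nat.card (EmbSet G (pathGraph (2 * m + 1))) := Nat.mul_le_mul_left _ h1
      _ ≤ Nat.card (EmbSet G (FG m)) := h2
      _ ≤ (m.factorial * 2 ^ m) * (Copies G (FG m)).ncard := h3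
      _ = 2 ^ m * (m.factorial * (Copies G (FG m)).ncard) := by ring
  exact Nat.le_of_mul_le_mul_left hchain (pow_pos (by norm_num) m)

end Stmt8Aux

/-- For odd `l ≥ 3` and `F'` the matching with `(l-1)/2` edges together with one isolated
vertex: `ex(n,e,P_l,K₃) ≤ (((l-1)/2)! * ex(n,e,F',K₃)) / 2`. -/
theorem stmt8 (l : ℕ) (hl : 3 ≤ l) (hodd : Odd l) :
    ∀ n e : ℕ,
      2 * exTriFree n e (pathGraph l) ≤
        ((l - 1) / 2).factorial *
          exTriFree n e (matchingGraph ((l - 1) / 2) ⊕g (⊥ : SimpleGraph (Fin 1))) := by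
  obtain ⟨m, rfl⟩ : ∃ m, l = 2 * m + 1 := ⟨(l - 1) / 2, by rcases hodd with ⟨k, hk⟩; omega⟩
  have hm : 0 < m := by omega
  have hdiv : (2 * m + 1 - 1) / 2 = m := by omega
  rw [hdiv]
  intro n e
  unfold exTriFree
  have hbddP : BddAbove {N | ∃ G : SimpleGraph (Fin n),
      G.CliqueFree 3 ∧ G.edgeSet.ncard = e ∧ _root_.copyCount (pathGraph (2 * m + 1)) G = N} := by
    apply Set.Finite.bddAbove
    apply Set.Finite.subset (Set.finite_range
      (fun G : SimpleGraph (Fin n) => _root_.copyCount (pathGraph (2 * m + 1)) G))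
    rintro N ⟨G, -, -, rfl⟩
    exact ⟨G, rfl⟩
  have hbddF : BddAbove {N | ∃ G : SimpleGraph (Fin n),
      G.CliqueFree 3 ∧ G.edgeSet.ncard = e ∧
        _root_.copyCount (matchingGraph m ⊕g (⊥ : SimpleGraph (Fin 1))) G = N} := by
    apply Set.Finite.bddAbove
    apply Set.Finite.subset (Set.finite_range
      (fun G : SimpleGraph (Fin n) =>
        _root_.copyCount (matchingGraph m ⊕g (⊥ : SimpleGraph (Fin 1))) G))
    rintro N ⟨G, -, -, rfl⟩
    exact ⟨G, rfl⟩
  rcases Set.eq_empty_or_nonempty {N | ∃ G : SimpleGraph (Fin n),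
      G.CliqueFree 3 ∧ G.edgeSet.ncard = e ∧ _root_.copyCount (pathGraph (2 * m + 1)) G = N} with
    hemp | hne
  · rw [hemp, csSup_empty]
    simp
  · obtain ⟨G, hG3, hGe, hGc⟩ := Nat.sSup_mem hne hbddP
    calc 2 * sSup {N | ∃ G : SimpleGraph (Fin n),
          G.CliqueFree 3 ∧ G.edgeSet.ncard = e ∧ _root_.copyCount (pathGraph (2 * m + 1)) G = N}
        = 2 * _root_.copyCount (pathGraph (2 * m + 1)) G := by rw [hGc]
      _ ≤ m.factorial * _root_.copyCount (matchingGraph m ⊕g (⊥ : SimpleGraph (Fin 1))) G :=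
          Stmt8Aux.key hm G hG3
      _ ≤ m.factorial * sSup {N | ∃ G : SimpleGraph (Fin n),
            G.CliqueFree 3 ∧ G.edgeSet.ncard = e ∧
              _root_.copyCount (matchingGraph m ⊕g (⊥ : SimpleGraph (Fin 1))) G = N} :=
          Nat.mul_le_mul_left _ (le_csSup hbddF ⟨G, hG3, hGe, rfl⟩)
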